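/- arXiv:math/0601493 — 3 statements merged into one kernel-verified Lean document; each statement's English description precedes it below -/
import Mathlib

section
/- Each of the seven tetrahedra T11 = {V10,V12,V14,V15}, T12 = {V12,V14,V15,V16}, T13 = {V12,V15,V16,V17}, T14 = {V12,V13,V15,V17}, T15 = {V10,V12,V13,V15}, T16 = {V10,V11,V13,V15}, T17 = {V10,V11,V12,V13} is taken by an integer affine unimodular transformation to the unit basis tetrahedron: for each of these tetrahedra, listed with vertices (P0,P1,P2,P3), there exist a 4×4 integer matrix M with determinant ±1 and an integer vector v ∈ ℤ^4 such that M·P0 + v = 0, M·P1 + v = e1, M·P2 + v = e2, and M·P3 + v = e3, where e1, e2, e3 are the first three standard basis vectors of ℤ^4. -/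
open Matrix Polynomial

def A1 : Matrix (Fin 4) (Fin 4) ℚ :=
  !![0, 1, 0, 0; 0, 0, 1, 0; 0, 0, 0, 1; 1, -3, 0, 4]

noncomputable def B11 : Matrix (Fin 4) (Fin 4) ℚ := (A1 ^ 2)⁻¹
noncomputable def B12 : Matrix (Fin 4) (Fin 4) ℚ := (A1 - 1) ^ 2 * (A1 ^ 2)⁻¹
noncomputable def B13 : Matrix (Fin 4) (Fin 4) ℚ := (A1 - 1) ^ 2 * (A1 + 1) * (A1 ^ 2)⁻¹

def V10 : Fin 4 → ℚ := ![-3, -2, -1, 1]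

/-- `V i j k` is the point `B11^i * B12^j * B13^k` applied to `V10`;
the paper's vertex `V_{1,4i+2j+k}`. -/
noncomputable def V (i j k : ℕ) : Fin 4 → ℚ := (B11 ^ i * B12 ^ j * B13 ^ k).mulVec V10

def stdQ (m : Fin 4) : Fin 4 → ℚ := fun i => if i = m then 1 else 0

/-- The tetrahedron with ordered vertices `P0 P1 P2 P3` is taken by an integer affine
unimodular transformation to the unit basis tetrahedron. -/
def UnimodularToUnitTetra (P0 P1 P2 P3 : Fin 4 → ℚ) : Prop :=
  ∃ (M : Matrix (Fin 4) (Fin 4) ℤ) (v : Fin 4 → ℤ),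
    (M.det = 1 ∨ M.det = -1) ∧
    (M.map (Int.cast : ℤ → ℚ)).mulVec P0 + (fun i => (v i : ℚ)) = 0 ∧
    (M.map (Int.cast : ℤ → ℚ)).mulVec P1 + (fun i => (v i : ℚ)) = stdQ 0 ∧
    (M.map (Int.cast : ℤ → ℚ)).mulVec P2 + (fun i => (v i : ℚ)) = stdQ 1 ∧
    (M.map (Int.cast : ℤ → ℚ)).mulVec P3 + (fun i => (v i : ℚ)) = stdQ 2

/-!
If `N` is an integer matrix with `det N = ±1` whose first three columns are the edge vectors
`P1 - P0, P2 - P0, P3 - P0` of a lattice tetrahedron, then `x ↦ N⁻¹ (x - P0)` is an integer affine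
unimodular map sending it to the unit basis tetrahedron. Since `A1` is unimodular, the matrices
`B11, B12, B13` are integral, so all the points `V_{1,*}` are lattice points, and for each of the
seven tetrahedra a suitable fourth column of `N` is exhibited and its determinant computed.
-/

def A1Int : Matrix (Fin 4) (Fin 4) ℤ :=
  !![0, 1, 0, 0; 0, 0, 1, 0; 0, 0, 0, 1; 1, -3, 0, 4]

def B11Int : Matrix (Fin 4) (Fin 4) ℤ :=
  !![9, -4, -11, 3; 3, 0, -4, 1; 1, 0, 0, 0; 0, 1, 0, 0]

def B12Int : Matrix (Fin 4) (Fin 4) ℤ := (A1Int - 1) ^ 2 * B11Int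

def B13Int : Matrix (Fin 4) (Fin 4) ℤ := (A1Int - 1) ^ 2 * (A1Int + 1) * B11Int

def VInt (i j k : ℕ) : Fin 4 → ℤ := (B11Int ^ i * B12Int ^ j * B13Int ^ k) *ᵥ ![-3, -2, -1, 1]

lemma A1_eq_map : A1 = (Int.castRingHom ℚ).mapMatrix A1Int := by
  ext i j; fin_cases i <;> fin_cases j <;> rfl

lemma B11_eq_map : B11 = (Int.castRingHom ℚ).mapMatrix B11Int := by
  refine inv_eq_right_inv ?_
  rw [A1_eq_map, ← map_pow, ← map_mul, show A1Int ^ 2 * B11Int = 1 by decide, map_one]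

lemma B12_eq_map : B12 = (Int.castRingHom ℚ).mapMatrix B12Int := by
  rw [B12, ← B11, B11_eq_map, A1_eq_map, B12Int, map_mul, map_pow, map_sub, map_one]

lemma B13_eq_map : B13 = (Int.castRingHom ℚ).mapMatrix B13Int := by
  rw [B13, ← B11, B11_eq_map, A1_eq_map, B13Int, map_mul, map_mul, map_pow, map_sub, map_add, map_one]

lemma V_eq_cast (i j k : ℕ) : V i j k = Int.cast ∘ VInt i j k := by
  have hV10 : V10 = Int.cast ∘ ![(-3 : ℤ), -2, -1, 1] := by
    ext r; fin_cases r <;> simp [V10]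
  funext r
  rw [V, B11_eq_map, B12_eq_map, B13_eq_map, ← map_pow, ← map_pow, ← map_pow, ← map_mul, ← map_mul,
    hV10]
  exact (RingHom.map_mulVec _ _ _ r).symm

lemma stdQ_eq_cast (m : Fin 4) : stdQ m = Int.cast ∘ Pi.single m 1 := by
  funext i
  by_cases h : i = m <;> simp [stdQ, h]

lemma unimodularToUnitTetra_of_int {P0 P1 P2 P3 : Fin 4 → ℤ} (M : Matrix (Fin 4) (Fin 4) ℤ)
    (v : Fin 4 → ℤ) (hM : IsUnit M.det) (h0 : M *ᵥ P0 + v = 0) (h1 : M *ᵥ P1 + v = Pi.single 0 1)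
    (h2 : M *ᵥ P2 + v = Pi.single 1 1) (h3 : M *ᵥ P3 + v = Pi.single 2 1) :
    UnimodularToUnitTetra (Int.cast ∘ P0) (Int.cast ∘ P1) (Int.cast ∘ P2) (Int.cast ∘ P3) := by
  have hcast {P m : Fin 4 → ℤ} (h : M *ᵥ P + v = m) :
      M.map (Int.cast : ℤ → ℚ) *ᵥ (Int.cast ∘ P) + (fun i => (v i : ℚ)) = Int.cast ∘ m := by
    funext i
    rw [← h, Pi.add_apply, Function.comp_apply, Pi.add_apply, Int.cast_add]
    exact congrArg (· + _) (RingHom.map_mulVec (Int.castRingHom ℚ) M P i).symm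
  refine ⟨M, v, Int.isUnit_iff.mp hM, ?_, ?_, ?_, ?_⟩
  · simpa using hcast h0
  · simpa only [stdQ_eq_cast] using hcast h1
  · simpa only [stdQ_eq_cast] using hcast h2
  · simpa only [stdQ_eq_cast] using hcast h3

lemma unimodularToUnitTetra_of_isUnit_det {P0 P1 P2 P3 : Fin 4 → ℤ} (w : Fin 4 → ℤ)
    (h : IsUnit (Matrix.of ![P1 - P0, P2 - P0, P3 - P0, w])ᵀ.det) :
    UnimodularToUnitTetra (Int.cast ∘ P0) (Int.cast ∘ P1) (Int.cast ∘ P2) (Int.cast ∘ P3) := by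
  set N := (Matrix.of ![P1 - P0, P2 - P0, P3 - P0, w])ᵀ
  have hedge (k : Fin 4) : N⁻¹ *ᵥ N.col k = Pi.single k 1 := by
    rw [← mulVec_single_one, mulVec_mulVec, nonsing_inv_mul N h, one_mulVec]
  refine unimodularToUnitTetra_of_int N⁻¹ (-(N⁻¹ *ᵥ P0)) (isUnit_nonsing_inv_det N h) ?_ ?_ ?_ ?_
  · exact add_neg_cancel _
  · rw [← sub_eq_add_neg, ← mulVec_sub]; exact hedge 0
  · rw [← sub_eq_add_neg, ← mulVec_sub]; exact hedge 1
  · rw [← sub_eq_add_neg, ← mulVec_sub]; exact hedge 2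

theorem statement5 :
    UnimodularToUnitTetra (V 0 0 0) (V 0 1 0) (V 1 0 0) (V 1 0 1) ∧
    UnimodularToUnitTetra (V 0 1 0) (V 1 0 0) (V 1 0 1) (V 1 1 0) ∧
    UnimodularToUnitTetra (V 0 1 0) (V 1 0 1) (V 1 1 0) (V 1 1 1) ∧
    UnimodularToUnitTetra (V 0 1 0) (V 0 1 1) (V 1 0 1) (V 1 1 1) ∧
    UnimodularToUnitTetra (V 0 0 0) (V 0 1 0) (V 0 1 1) (V 1 0 1) ∧
    UnimodularToUnitTetra (V 0 0 0) (V 0 0 1) (V 0 1 1) (V 1 0 1) ∧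
    UnimodularToUnitTetra (V 0 0 0) (V 0 0 1) (V 0 1 0) (V 0 1 1) := by
  simp only [V_eq_cast]
  exact ⟨unimodularToUnitTetra_of_isUnit_det ![1, 0, 0, 0] (Int.isUnit_iff.mpr (by decide)),
    unimodularToUnitTetra_of_isUnit_det ![0, 2, 1, 0] (Int.isUnit_iff.mpr (by decide)),
    unimodularToUnitTetra_of_isUnit_det ![0, 3, 1, 0] (Int.isUnit_iff.mpr (by decide)),
    unimodularToUnitTetra_of_isUnit_det ![1, 0, 0, 0] (Int.isUnit_iff.mpr (by decide)),
    unimodularToUnitTetra_of_isUnit_det ![1, 0, 0, 0] (Int.isUnit_iff.mpr (by decide)),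
    unimodularToUnitTetra_of_isUnit_det ![0, 0, 1, 4] (Int.isUnit_iff.mpr (by decide)),
    unimodularToUnitTetra_of_isUnit_det ![0, 0, 0, 1] (Int.isUnit_iff.mpr (by decide))⟩
end

section
/- The integer distances from the origin to the planes spanned by the tetrahedra T11, T12, T13, T14, T15, T16, T17 equal 4, 3, 2, 4, 3, 2, 1 respectively: for each tetrahedron T1m with corresponding value d_m in (4,3,2,4,3,2,1), there exists an integer linear functional f on ℤ^4, given by a coefficient vector in ℤ^4 whose entries have greatest common divisor 1, such that f(P) = d_m for every vertex P of T1m. -/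
open Matrix Polynomial

/-- The plane through `P0 P1 P2 P3` lies at integer distance `d` from the origin:
there is a primitive integer linear functional taking value `d` at all four points. -/
def AtIntegerDistance (d : ℤ) (P0 P1 P2 P3 : Fin 4 → ℚ) : Prop :=
  ∃ f : Fin 4 → ℤ, Finset.univ.gcd f = 1 ∧
    (∑ i, (f i : ℚ) * P0 i = (d : ℚ)) ∧
    (∑ i, (f i : ℚ) * P1 i = (d : ℚ)) ∧
    (∑ i, (f i : ℚ) * P2 i = (d : ℚ)) ∧
    (∑ i, (f i : ℚ) * P3 i = (d : ℚ))

/-!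
`A1` is the companion matrix of `x⁴ - 4x³ + 3x - 1`, so `det A1 = -1` and `A1⁻²` is an integer
matrix; hence all eight vertices are integer points, obtained from `V10` by at most three
integer matrix-vector products. For each tetrahedron the primitive normal of the hyperplane
through its vertices is then an explicit integer vector, and the distance is its common value.
-/

theorem Matrix.mulVec_fin_four {R : Type*} [NonUnitalNonAssocSemiring R]
    (a b c d e f g h i j k l m n o p x₀ x₁ x₂ x₃ : R) :
    !![a, b, c, d; e, f, g, h; i, j, k, l; m, n, o, p] *ᵥ ![x₀, x₁, x₂, x₃] =
      ![a * x₀ + b * x₁ + c * x₂ + d * x₃, e * x₀ + f * x₁ + g * x₂ + h * x₃,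
        i * x₀ + j * x₁ + k * x₂ + l * x₃, m * x₀ + n * x₁ + o * x₂ + p * x₃] := by
  ext r
  fin_cases r <;> simp [mulVec, dotProduct, Fin.sum_univ_four, add_assoc]

theorem B11_eq : B11 = !![9, -4, -11, 3; 3, 0, -4, 1; 1, 0, 0, 0; 0, 1, 0, 0] := by
  refine inv_eq_right_inv ?_
  ext i j
  fin_cases i <;> fin_cases j <;>
    simp [A1, pow_two, mul_apply, Fin.sum_univ_four] <;> norm_num

theorem B12_eq : B12 = !![4, -4, -3, 1; 1, 1, -4, 1; 1, -2, 1, 0; 0, 1, -2, 1] := by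
  rw [B12, ← B11, B11_eq]
  ext i j
  fin_cases i <;> fin_cases j <;>
    simp [A1, pow_two, mul_apply, Fin.sum_univ_four] <;> norm_num

theorem B13_eq : B13 = !![5, -3, -7, 2; 2, -1, -3, 1; 1, -1, -1, 1; 1, -2, -1, 3] := by
  rw [B13, ← B11, B11_eq]
  ext i j
  fin_cases i <;> fin_cases j <;>
    simp [A1, pow_two, mul_apply, Fin.sum_univ_four, one_apply] <;> norm_num

theorem V_succ (i j k : ℕ) : V (i + 1) j k = B11 *ᵥ V i j k := by
  simp only [V, pow_succ', mul_assoc, mulVec_mulVec]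

theorem V_zero_succ (j k : ℕ) : V 0 (j + 1) k = B12 *ᵥ V 0 j k := by
  simp only [V, pow_zero, one_mul, pow_succ', mul_assoc, mulVec_mulVec]

theorem V_zero_zero_succ (k : ℕ) : V 0 0 (k + 1) = B13 *ᵥ V 0 0 k := by
  simp only [V, pow_zero, one_mul, pow_succ', mulVec_mulVec]

theorem V_zero_zero_zero : V 0 0 0 = ![-3, -2, -1, 1] := by
  simp [V, V10]

theorem V_zero_zero_one : V 0 0 1 = ![0, 0, 1, 5] := by
  rw [V_zero_zero_succ, V_zero_zero_zero, B13_eq, mulVec_fin_four]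
  norm_num

theorem V_zero_one_zero : V 0 1 0 = ![0, 0, 0, 1] := by
  rw [V_zero_succ, V_zero_zero_zero, B12_eq, mulVec_fin_four]
  norm_num

theorem V_zero_one_one : V 0 1 1 = ![2, 1, 1, 3] := by
  rw [V_zero_succ, V_zero_zero_one, B12_eq, mulVec_fin_four]
  norm_num

theorem V_one_zero_zero : V 1 0 0 = ![-5, -4, -3, -2] := by
  rw [V_succ, V_zero_zero_zero, B11_eq, mulVec_fin_four]
  norm_num

theorem V_one_zero_one : V 1 0 1 = ![4, 1, 0, 0] := by
  rw [V_succ, V_zero_zero_one, B11_eq, mulVec_fin_four]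
  norm_num

theorem V_one_one_zero : V 1 1 0 = ![3, 1, 0, 0] := by
  rw [V_succ, V_zero_one_zero, B11_eq, mulVec_fin_four]
  norm_num

theorem V_one_one_one : V 1 1 1 = ![12, 5, 2, 1] := by
  rw [V_succ, V_zero_one_one, B11_eq, mulVec_fin_four]
  norm_num

theorem statement6 :
    AtIntegerDistance 4 (V 0 0 0) (V 0 1 0) (V 1 0 0) (V 1 0 1) ∧
    AtIntegerDistance 3 (V 0 1 0) (V 1 0 0) (V 1 0 1) (V 1 1 0) ∧
    AtIntegerDistance 2 (V 0 1 0) (V 1 0 1) (V 1 1 0) (V 1 1 1) ∧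
    AtIntegerDistance 4 (V 0 1 0) (V 0 1 1) (V 1 0 1) (V 1 1 1) ∧
    AtIntegerDistance 3 (V 0 0 0) (V 0 1 0) (V 0 1 1) (V 1 0 1) ∧
    AtIntegerDistance 2 (V 0 0 0) (V 0 0 1) (V 0 1 1) (V 1 0 1) ∧
    AtIntegerDistance 1 (V 0 0 0) (V 0 0 1) (V 0 1 0) (V 0 1 1) := by
  rw [V_zero_zero_zero, V_zero_zero_one, V_zero_one_zero, V_zero_one_one, V_one_zero_zero,
    V_one_zero_one, V_one_one_zero, V_one_one_one]
  refine ⟨⟨![-1, 8, -13, 4], by decide, ?_, ?_, ?_, ?_⟩,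
    ⟨![0, 3, -7, 3], by decide, ?_, ?_, ?_, ?_⟩,
    ⟨![0, 2, -5, 2], by decide, ?_, ?_, ?_, ?_⟩,
    ⟨![-1, 8, -14, 4], by decide, ?_, ?_, ?_, ?_⟩,
    ⟨![-1, 7, -11, 3], by decide, ?_, ?_, ?_, ?_⟩,
    ⟨![-2, 10, -13, 3], by decide, ?_, ?_, ?_, ?_⟩,
    ⟨![0, 2, -4, 1], by decide, ?_, ?_, ?_, ?_⟩⟩ <;>
    simp [Fin.sum_univ_four] <;> norm_num
end

section
/- The eight points V30, V31, V32, V33, V34, V35, V36, V37 are pairwise distinct integer points, and they all lie in a common hyperplane at unit integer distance from the origin: there exists an integer linear functional f on ℤ^4, given by a coefficient vector in ℤ^4 whose entries have greatest common divisor 1, such that f(V3m) = 1 for every m = 0, 1, ..., 7. -/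
open Matrix Polynomial

def A3 : Matrix (Fin 4) (Fin 4) ℚ :=
  !![0, 1, 0, 0; 0, 0, 1, 0; 0, 0, 0, 1; -1, -3, 1, 3]

lemma hdetA3 : A3.det ≠ 0 := by
  simp (config := {decide := true}) [A3, Matrix.det_succ_row_zero, Fin.sum_univ_succ, Fin.succAbove]

lemma hdetA3sub : (A3 - 1).det ≠ 0 := by
  have h : A3 - 1 = !![-1, 1, 0, 0; 0, -1, 1, 0; 0, 0, -1, 1; -1, -3, 1, 2] := by
    ext i j
    fin_cases i <;> fin_cases j <;>
      simp [A3, Matrix.one_apply, Matrix.vecHead, Matrix.vecTail] <;> norm_num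
  rw [h]
  simp (config := {decide := true}) [Matrix.det_succ_row_zero, Fin.sum_univ_succ, Fin.succAbove]
  norm_num

lemma hdetA3add : (A3 + 1).det ≠ 0 := by
  have h : A3 + 1 = !![1, 1, 0, 0; 0, 1, 1, 0; 0, 0, 1, 1; -1, -3, 1, 4] := by
    ext i j
    fin_cases i <;> fin_cases j <;>
      simp [A3, Matrix.one_apply, Matrix.vecHead, Matrix.vecTail] <;> norm_num
  rw [h]
  simp (config := {decide := true}) [Matrix.det_succ_row_zero, Fin.sum_univ_succ, Fin.succAbove]
  norm_num

noncomputable def gA3 : GL (Fin 4) ℚ := Matrix.GeneralLinearGroup.mkOfDetNeZero A3 hdetA3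
noncomputable def uA3 : GL (Fin 4) ℚ := Matrix.GeneralLinearGroup.mkOfDetNeZero (A3 - 1) hdetA3sub
noncomputable def vA3 : GL (Fin 4) ℚ := Matrix.GeneralLinearGroup.mkOfDetNeZero (A3 + 1) hdetA3add

noncomputable def B31 : GL (Fin 4) ℚ := (gA3 ^ 2)⁻¹
noncomputable def B32 : GL (Fin 4) ℚ := uA3 * gA3⁻¹
noncomputable def B33 : GL (Fin 4) ℚ := vA3

def V30 : Fin 4 → ℚ := ![-1, -1, -1, 0]

/-- The eight vertices `V30, …, V37` of the face from Example 3. -/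
noncomputable def Vs : Fin 8 → (Fin 4 → ℚ) :=
  ![V30,
    ((B33 : GL (Fin 4) ℚ) : Matrix (Fin 4) (Fin 4) ℚ).mulVec V30,
    ((B32 * B33 : GL (Fin 4) ℚ) : Matrix (Fin 4) (Fin 4) ℚ).mulVec V30,
    ((B31 * B32⁻¹ : GL (Fin 4) ℚ) : Matrix (Fin 4) (Fin 4) ℚ).mulVec V30,
    ((B32⁻¹ : GL (Fin 4) ℚ) : Matrix (Fin 4) (Fin 4) ℚ).mulVec V30,
    ((B31 * B33 ^ 2 : GL (Fin 4) ℚ) : Matrix (Fin 4) (Fin 4) ℚ).mulVec V30,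
    ((B31 * B33 : GL (Fin 4) ℚ) : Matrix (Fin 4) (Fin 4) ℚ).mulVec V30,
    ((B31 * B32⁻¹ * B33 : GL (Fin 4) ℚ) : Matrix (Fin 4) (Fin 4) ℚ).mulVec V30]

/-! `A3` and `A3 - E` have determinant `±1`, so `B31`, `B32` and their inverses are integer
matrices and each vertex is an explicit integer vector; the plane `3x + 3y - 7z + 2w = 1`
through them is then checked coordinatewise. -/

lemma A3_inv : A3⁻¹ = !![-3, 1, 3, -1; 1, 0, 0, 0; 0, 1, 0, 0; 0, 0, 1, 0] := by
  refine inv_eq_right_inv ?_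
  ext i j; fin_cases i <;> fin_cases j <;> norm_num [A3, mul_apply, Fin.sum_univ_succ, one_apply]

lemma A3_sub_one : A3 - 1 = !![-1, 1, 0, 0; 0, -1, 1, 0; 0, 0, -1, 1; -1, -3, 1, 2] := by
  ext i j; fin_cases i <;> fin_cases j <;> norm_num [A3, one_apply]

lemma A3_add_one : A3 + 1 = !![1, 1, 0, 0; 0, 1, 1, 0; 0, 0, 1, 1; -1, -3, 1, 4] := by
  ext i j; fin_cases i <;> fin_cases j <;> norm_num [A3, one_apply]

lemma A3_sub_one_inv :
    (A3 - 1)⁻¹ = !![0, 3, 2, -1; 1, 3, 2, -1; 1, 4, 2, -1; 1, 4, 3, -1] := by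
  refine inv_eq_right_inv ?_
  ext i j; fin_cases i <;> fin_cases j <;>
    norm_num [A3_sub_one, mul_apply, Fin.sum_univ_succ, one_apply]

def vertexCoords : Fin 8 → Fin 4 → ℤ :=
  ![![-1, -1, -1, 0], ![-2, -2, -1, 3], ![0, 0, 1, 4], ![-4, -5, -6, -7],
    ![-6, -7, -8, -8], ![-3, -4, -4, -3], ![-1, -2, -2, -2], ![-9, -11, -13, -15]]

lemma Vs_eq_vertexCoords : Vs = fun m i => (vertexCoords m i : ℚ) := by
  funext m
  fin_cases m <;>
    simp only [Vs, B31, B32, B33, gA3, uA3, vA3, _root_.mul_inv_rev, inv_inv, sq, Units.val_mul,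
      coe_units_inv, GeneralLinearGroup.val_mkOfDetNeZero, A3_inv, A3_sub_one_inv, A3_add_one,
      ← mulVec_mulVec] <;>
    simp only [A3_sub_one] <;>
    norm_num [A3, V30, vertexCoords, funext_iff, Fin.forall_fin_succ, -mulVec_cons]

lemma vertexCoords_injective : Function.Injective vertexCoords := by
  decide

def planeNormal : Fin 4 → ℤ := ![3, 3, -7, 2]

lemma gcd_planeNormal : Finset.univ.gcd planeNormal = 1 := by
  decide

lemma sum_planeNormal_mul_vertexCoords (m : Fin 8) :
    ∑ i, planeNormal i * vertexCoords m i = 1 := by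
  revert m
  decide

theorem statement18 :
    Function.Injective Vs ∧
    (∀ m i, ∃ z : ℤ, Vs m i = (z : ℚ)) ∧
    (∃ f : Fin 4 → ℤ, Finset.univ.gcd f = 1 ∧
      ∀ m, ∑ i, (f i : ℚ) * Vs m i = 1) := by
  simp only [Vs_eq_vertexCoords]
  refine ⟨Int.cast_injective.comp_left.comp vertexCoords_injective,
    fun m i => ⟨vertexCoords m i, rfl⟩, planeNormal, gcd_planeNormal, fun m => ?_⟩
  exact_mod_cast sum_planeNormal_mul_vertexCoords m
end
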